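/- Assume the logarithmic Sobolev inequality in scale-invariant form: for all u ∈ H^1(ℝ^d) with u ≠ 0, ∫ log|u| · |u|^2 dx / ‖u‖_2^2 ≤ log‖u‖_2 + (d/4) log( (2/(π d e)) ‖∇u‖_2^2/‖u‖_2^2 ). Then Nash's inequality holds with constant C_1(d) = 2/(π d e): ‖u‖_2^{2+4/d} ≤ (2/(π d e)) ‖u‖_1^{4/d} ‖∇u‖_2^2 for all u ∈ H^1(ℝ^d) ∩ L^1(ℝ^d). -/

import Mathlib

/-!
Jensen's inequality for the probability density `u² / ‖u‖₂²`, in the form of the tangent-line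
bound `log s ≥ 1 - s⁻¹`, gives `log (‖u‖₂² / ‖u‖₁) ≤ ∫ log |u| u² / ‖u‖₂²`; chaining it with the
logarithmic Sobolev inequality and exponentiating gives Nash's inequality.

Since a non-integrable function has Bochner integral `0` and `log 0 = 0`, two degenerate cases must
be excluded first: `log |u| u²` not integrable, and `‖∇u‖₂ = 0`. In either case the two sides of the
log-Sobolev inequality scale differently, under `u ↦ c u`, respectively under the dilations
`u ↦ u (l • ·)`, and a suitable scale violates it.
-/

open MeasureTheory Real

noncomputable def nrm (d : ℕ) (u : EuclideanSpace ℝ (Fin d) → ℝ) (q : ℝ) : ℝ :=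
  (eLpNorm u (ENNReal.ofReal q) volume).toReal

noncomputable def gradNrm (d : ℕ) (u : EuclideanSpace ℝ (Fin d) → ℝ) : ℝ :=
  (eLpNorm (fun x => ‖fderiv ℝ u x‖) 2 volume).toReal

theorem le_log_mul_sq {a t : ℝ} (ha : 0 < a) (ht : 0 ≤ t) :
    (1 - log a) * t ^ 2 - a⁻¹ * t ≤ log t * t ^ 2 := by
  rcases ht.eq_or_lt with rfl | ht
  · simp
  have h := one_sub_inv_le_log_of_pos (mul_pos ht ha)
  rw [log_mul ht.ne' ha.ne'] at h
  have : (t * a)⁻¹ * t ^ 2 = a⁻¹ * t := by field_simp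
  nlinarith [mul_le_mul_of_nonneg_right h (sq_nonneg t)]

theorem nash_of_log_le {d C N₁ N₂ G : ℝ} (hd : 0 < d) (hC : 0 < C) (hN₁ : 0 < N₁)
    (hN₂ : 0 < N₂) (hG : 0 < G)
    (h : log (N₂ ^ 2 / N₁) ≤ log N₂ + d / 4 * log (C * G ^ 2 / N₂ ^ 2)) :
    N₂ ^ (2 + 4 / d) ≤ C * N₁ ^ (4 / d) * G ^ 2 := by
  rw [← log_le_log_iff (by positivity) (by positivity), log_rpow hN₂,
    log_mul (by positivity) (by positivity), log_mul hC.ne' (by positivity), log_rpow hN₁, log_pow]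
  rw [log_div (by positivity) hN₁.ne', log_div (by positivity) (by positivity),
    log_mul hC.ne' (by positivity), log_pow, log_pow] at h
  have := mul_le_mul_of_nonneg_left h (by positivity : (0:ℝ) ≤ 4 / d)
  field_simp at this ⊢
  push_cast at this ⊢
  linarith

section Entropy

variable {α : Type*} [MeasurableSpace α] {μ : Measure α} {f : α → ℝ}

theorem integral_abs_pos_of_integral_sq_pos (hf : Integrable f μ)
    (hpos : 0 < ∫ x, f x ^ 2 ∂μ) : 0 < ∫ x, |f x| ∂μ := by
  refine (integral_nonneg fun x => abs_nonneg _).lt_of_ne' fun h0 => hpos.ne' ?_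
  have hf0 : (fun x => |f x|) =ᵐ[μ] 0 :=
    (integral_eq_zero_iff_of_nonneg (fun x => abs_nonneg _) hf.abs).1 h0
  exact integral_eq_zero_of_ae (hf0.mono fun x hx => by simp_all)

theorem log_integral_sq_div_integral_abs_le (hf : Integrable f μ)
    (hf2 : Integrable (fun x => f x ^ 2) μ) (hent : Integrable (fun x => log |f x| * f x ^ 2) μ)
    (hpos : 0 < ∫ x, f x ^ 2 ∂μ) :
    log ((∫ x, f x ^ 2 ∂μ) / ∫ x, |f x| ∂μ) ≤
      (∫ x, log |f x| * f x ^ 2 ∂μ) / ∫ x, f x ^ 2 ∂μ := by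
  set A := ∫ x, f x ^ 2 ∂μ
  set B := ∫ x, |f x| ∂μ
  have hB : 0 < B := integral_abs_pos_of_integral_sq_pos hf hpos
  have h := integral_mono ((hf2.const_mul (1 - log (B / A))).sub (hf.abs.const_mul (B / A)⁻¹))
    hent fun x => by simpa [sq_abs] using le_log_mul_sq (div_pos hB hpos) (abs_nonneg (f x))
  rw [integral_sub' (hf2.const_mul _) (hf.abs.const_mul _), integral_const_mul,
    integral_const_mul] at h
  rw [le_div_iff₀ hpos, ← inv_div, log_inv]
  have : (B / A)⁻¹ * B = A := by field_simp
  linarith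

theorem integrable_log_abs_const_mul_mul_sq_iff {c : ℝ} (hc : c ≠ 0)
    (hf2 : Integrable (fun x => f x ^ 2) μ) :
    Integrable (fun x => log |c * f x| * (c * f x) ^ 2) μ ↔
      Integrable (fun x => log |f x| * f x ^ 2) μ := by
  have hpt : (fun x => log |c * f x| * (c * f x) ^ 2) =
      fun x => c ^ 2 * log |c| * f x ^ 2 + c ^ 2 * (log |f x| * f x ^ 2) := by
    funext x
    rcases eq_or_ne (f x) 0 with h | h
    · simp [h]
    · rw [abs_mul, log_mul (abs_ne_zero.2 hc) (abs_ne_zero.2 h)]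
      ring
  rw [hpt, integrable_add_iff_integrable_right' (hf2.const_mul _),
    integrable_const_mul_iff (pow_ne_zero 2 hc).isUnit]

end Entropy

section Dilation

variable {E : Type*} [NormedAddCommGroup E] [NormedSpace ℝ E] {u : E → ℝ}

theorem norm_fderiv_const_mul (hu : Differentiable ℝ u) (c : ℝ) (x : E) :
    ‖fderiv ℝ (fun y => c * u y) x‖ = |c| * ‖fderiv ℝ u x‖ := by
  rw [fderiv_const_mul (hu x), norm_smul, norm_eq_abs]

theorem norm_fderiv_comp_smul (l : ℝ) (x : E) :
    ‖fderiv ℝ (fun y => u (l • y)) x‖ = |l| * ‖fderiv ℝ u (l • x)‖ := by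
  rw [fderiv_comp_smul, norm_smul, norm_eq_abs]

theorem memLp_two_comp_smul [MeasurableSpace E] [BorelSpace E] [FiniteDimensional ℝ E]
    {μ : Measure E} [μ.IsAddHaarMeasure] {l : ℝ} (hl : l ≠ 0) (hu : MemLp u 2 μ) :
    MemLp (fun x => u (l • x)) 2 μ :=
  (memLp_two_iff_integrable_sq
    (hu.1.comp_quasiMeasurePreserving (Measure.quasiMeasurePreserving_smul μ hl))).2
    (((memLp_two_iff_integrable_sq hu.1).1 hu).comp_smul hl)

end Dilation

def LogSobolevIneq (d : ℕ) (C : ℝ) : Prop :=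
  ∀ u : EuclideanSpace ℝ (Fin d) → ℝ,
    Differentiable ℝ u → MemLp u 2 volume →
    MemLp (fun x => ‖fderiv ℝ u x‖) 2 volume → u ≠ 0 →
    (∫ x, log |u x| * u x ^ 2) / nrm d u 2 ^ 2 ≤
      log (nrm d u 2) + (d / 4 : ℝ) * log (C * gradNrm d u ^ 2 / nrm d u 2 ^ 2)

section Euclidean

variable {d : ℕ} {u : EuclideanSpace ℝ (Fin d) → ℝ}

theorem nrm_two_sq_eq_integral_sq (hu : MemLp u 2 volume) : nrm d u 2 ^ 2 = ∫ x, u x ^ 2 := by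
  rw [nrm, ENNReal.ofReal_ofNat, hu.eLpNorm_eq_integral_rpow_norm two_ne_zero ENNReal.ofNat_ne_top,
    ENNReal.toReal_ofReal (by positivity), ← rpow_natCast, ← rpow_mul (by positivity)]
  norm_num

theorem nrm_one_eq_integral_abs (hu : MemLp u 1 volume) : nrm d u 1 = ∫ x, |u x| := by
  rw [nrm, ENNReal.ofReal_one, hu.eLpNorm_eq_integral_rpow_norm one_ne_zero ENNReal.one_ne_top,
    ENNReal.toReal_ofReal (by positivity)]
  simp

theorem nrm_nonneg {q : ℝ} : 0 ≤ nrm d u q := ENNReal.toReal_nonneg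

theorem ne_zero_of_nrm_pos {q : ℝ} (h : 0 < nrm d u q) : u ≠ 0 := by
  rintro rfl
  simp [nrm] at h

theorem nrm_const_mul (c q : ℝ) : nrm d (fun x => c * u x) q = |c| * nrm d u q := by
  rw [nrm, nrm, show (fun x => c * u x) = c • u from rfl, eLpNorm_const_smul,
    ENNReal.toReal_mul, toReal_enorm, norm_eq_abs]

theorem gradNrm_const_mul (hu : Differentiable ℝ u) (c : ℝ) :
    gradNrm d (fun x => c * u x) = |c| * gradNrm d u := by
  rw [gradNrm, gradNrm, funext (norm_fderiv_const_mul hu c),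
    show (fun x => |c| * ‖fderiv ℝ u x‖) = |c| • fun x => ‖fderiv ℝ u x‖ from rfl,
    eLpNorm_const_smul, ENNReal.toReal_mul, toReal_enorm, norm_eq_abs, abs_abs]

theorem integral_comp_smul_of_pos {l : ℝ} (hl : 0 < l) (f : EuclideanSpace ℝ (Fin d) → ℝ) :
    ∫ x, f (l • x) = (l ^ d)⁻¹ * ∫ x, f x := by
  rw [Measure.integral_comp_smul, finrank_euclideanSpace_fin, abs_of_pos (by positivity),
    smul_eq_mul]

end Euclidean

namespace LogSobolevIneq

variable {d : ℕ} {C : ℝ} {u : EuclideanSpace ℝ (Fin d) → ℝ}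

theorem integrable_entropy (h : LogSobolevIneq d C) (hu : Differentiable ℝ u)
    (hu2 : MemLp u 2 volume) (hgrad : MemLp (fun x => ‖fderiv ℝ u x‖) 2 volume)
    (hN : 0 < nrm d u 2) : Integrable (fun x => log |u x| * u x ^ 2) volume := by
  by_contra hent
  set N := nrm d u 2
  set K := log N + (d / 4 : ℝ) * log (C * gradNrm d u ^ 2 / N ^ 2) with hK
  -- the right-hand side for `c u` is `log c + K = -1`, its left-hand side the junk value `0`
  set c := exp (-K - 1)
  have hc : 0 < c := exp_pos _
  have hcN : 0 < nrm d (fun x => c * u x) 2 := by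
    rw [nrm_const_mul, abs_of_pos hc]
    positivity
  have hcu := h (fun x => c * u x) (hu.const_mul c) (hu2.const_mul c)
    (by simpa only [norm_fderiv_const_mul hu] using hgrad.const_mul |c|) (ne_zero_of_nrm_pos hcN)
  have hscale : C * (|c| * gradNrm d u) ^ 2 / (|c| * N) ^ 2 = C * gradNrm d u ^ 2 / N ^ 2 := by
    field_simp
  rw [integral_undef ((integrable_log_abs_const_mul_mul_sq_iff hc.ne'
      ((memLp_two_iff_integrable_sq hu2.1).1 hu2)).not.2 hent), zero_div, nrm_const_mul,
    gradNrm_const_mul hu, hscale, abs_of_pos hc, log_mul hc.ne' hN.ne', log_exp] at hcu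
  linarith

theorem gradNrm_pos (h : LogSobolevIneq d C) (hd : 1 ≤ d) (hu : Differentiable ℝ u)
    (hu2 : MemLp u 2 volume) (hgrad : MemLp (fun x => ‖fderiv ℝ u x‖) 2 volume)
    (hN : 0 < nrm d u 2) : 0 < gradNrm d u := by
  refine ENNReal.toReal_nonneg.lt_of_ne' fun hG => ?_
  have hgrad0 : (fun x => ‖fderiv ℝ u x‖) =ᵐ[volume] 0 := by
    rw [← eLpNorm_eq_zero_iff hgrad.1 two_ne_zero]
    exact (ENNReal.toReal_eq_zero_iff _).1 hG |>.resolve_right hgrad.eLpNorm_ne_top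
  set N := nrm d u 2
  set I := ∫ x, log |u x| * u x ^ 2 with hI
  -- the left-hand side `I / N²` is dilation invariant, while for `v = u (exp t • ·)` the
  -- right-hand side is `log ‖v‖₂ = I / N² - 1 / 2`
  set t := (log (N ^ 2) - 2 * (I / N ^ 2) + 1) / d
  set l := exp t
  have hl : 0 < l := exp_pos t
  set v : EuclideanSpace ℝ (Fin d) → ℝ := fun x => u (l • x)
  have hv2 : MemLp v 2 volume := memLp_two_comp_smul hl.ne' hu2
  have hvgrad0 : (fun x => ‖fderiv ℝ v x‖) =ᵐ[volume] 0 := by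
    filter_upwards [(Measure.quasiMeasurePreserving_smul volume hl.ne').ae_eq_comp hgrad0]
      with x hx
    simp_all [v, norm_fderiv_comp_smul]
  have hvN : nrm d v 2 ^ 2 = (l ^ d)⁻¹ * N ^ 2 := by
    rw [nrm_two_sq_eq_integral_sq hv2, nrm_two_sq_eq_integral_sq hu2]
    exact integral_comp_smul_of_pos hl fun x => u x ^ 2
  have hvN_pos : 0 < nrm d v 2 := by
    refine nrm_nonneg.lt_of_ne' fun h0 => ?_
    rw [h0] at hvN
    nlinarith [pow_pos hN 2, inv_pos.2 (pow_pos hl d)]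
  have hv := h v (hu.comp (differentiable_id.const_smul l)) hv2 (MemLp.zero.ae_eq hvgrad0.symm)
    (ne_zero_of_nrm_pos hvN_pos)
  have hvG : gradNrm d v = 0 := by
    rw [gradNrm, eLpNorm_congr_ae hvgrad0, eLpNorm_zero, ENNReal.toReal_zero]
  have hd0 : (0 : ℝ) < d := by exact_mod_cast hd
  have hlogv : log (nrm d v 2 ^ 2) = 2 * (I / N ^ 2) - 1 := by
    rw [hvN, log_mul (by positivity) (by positivity), log_inv, log_pow, log_exp]
    have hdt : d * t = log (N ^ 2) - 2 * (I / N ^ 2) + 1 := by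
      simp only [t]
      field_simp
    linarith
  rw [integral_comp_smul_of_pos hl fun x => log |u x| * u x ^ 2, ← hI, hvN, hvG,
    mul_div_mul_left _ _ (by positivity), zero_pow two_ne_zero, mul_zero, zero_div, log_zero,
    mul_zero, add_zero] at hv
  have hlog_sq := log_pow (nrm d v 2) 2
  push_cast at hlog_sq
  linarith

end LogSobolevIneq

/-- If the scale-invariant logarithmic Sobolev inequality holds on `H¹(ℝ^d)`, then Nash's
inequality holds with constant `C₁(d) = 2/(π d e)`. -/
theorem nash_from_logSobolev (d : ℕ) (hd : 1 ≤ d)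
    (hLogSob : ∀ u : EuclideanSpace ℝ (Fin d) → ℝ,
      Differentiable ℝ u → MemLp u 2 volume →
      MemLp (fun x => ‖fderiv ℝ u x‖) 2 volume → u ≠ 0 →
      (∫ x, Real.log |u x| * (u x) ^ 2) / nrm d u 2 ^ 2 ≤
        Real.log (nrm d u 2)
          + ((d : ℝ) / 4) * Real.log ((2 / (π * d * Real.exp 1))
              * gradNrm d u ^ 2 / nrm d u 2 ^ 2)) :
    ∀ u : EuclideanSpace ℝ (Fin d) → ℝ,
      Differentiable ℝ u → MemLp u 2 volume →
      MemLp (fun x => ‖fderiv ℝ u x‖) 2 volume → MemLp u 1 volume →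
      nrm d u 2 ^ ((2 : ℝ) + 4 / d) ≤
        (2 / (π * d * Real.exp 1)) * nrm d u 1 ^ ((4 : ℝ) / d) * gradNrm d u ^ 2 := by
  intro u hu hu2 hgrad hu1
  have hd0 : (0 : ℝ) < d := by exact_mod_cast hd
  rcases nrm_nonneg.eq_or_lt with hN | hN
  · rw [← hN, zero_rpow (by positivity)]
    have := rpow_nonneg (nrm_nonneg (u := u) (q := 1)) (4 / d)
    positivity
  have hLS : LogSobolevIneq d (2 / (π * d * exp 1)) := hLogSob
  have hu1' : Integrable u volume := memLp_one_iff_integrable.1 hu1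
  have hsq : Integrable (fun x => u x ^ 2) volume := (memLp_two_iff_integrable_sq hu2.1).1 hu2
  have hsq_pos : 0 < ∫ x, u x ^ 2 := nrm_two_sq_eq_integral_sq hu2 ▸ pow_pos hN 2
  have hjensen := log_integral_sq_div_integral_abs_le hu1' hsq
    (hLS.integrable_entropy hu hu2 hgrad hN) hsq_pos
  rw [← nrm_two_sq_eq_integral_sq hu2, ← nrm_one_eq_integral_abs hu1] at hjensen
  refine nash_of_log_le hd0 (by positivity) ?_ hN (hLS.gradNrm_pos hd hu hu2 hgrad hN)
    (hjensen.trans (hLogSob u hu hu2 hgrad (ne_zero_of_nrm_pos hN)))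
  exact nrm_one_eq_integral_abs hu1 ▸ integral_abs_pos_of_integral_sq_pos hu1' hsq_pos
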